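/- Let G be a finite weighted complete graph on N vertices with edge weights in [0,1], and let 0 ≤ ε ≤ 1. Define G_ε by replacing every edge weight exceeding ε with 1. Let m(ε) be the number of finite 0-dimensional persistence points (0,d) of the Vietoris–Rips filtration of G with ε < d < ∞. Then for any p ≥ 1, the p-Wasserstein distance between the 0-dimensional persistence diagrams of G and G_ε is at most m(ε)^{1/p} · (1 − ε). -/

import Mathlib

/-!
The number of components dying in `(a, b]` is `β₀(a) - β₀(b)`, the jumps of the step function
`β₀` telescoping. Thresholding leaves the Rips graphs at scales `≤ ε` unchanged, and at scale `1`
both graphs are complete; moreover every thresholded weight is `≤ ε` or `1`. So the deaths `≤ ε`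
survive with their multiplicities and the `m(ε)` later deaths all move to `1`. Matching each
death `d` with its image costs `(1 - d)^p ≤ (1 - ε)^p` for the late deaths and nothing otherwise.
-/

open scoped Classical
noncomputable section

variable {V : Type*} [Fintype V]

/-- Vietoris–Rips 1-skeleton of a weighted complete graph at scale `α`. -/
def vrGraph (w : V → V → ℝ) (α : ℝ) : SimpleGraph V where
  Adj i j := i ≠ j ∧ max (w i j) (w j i) ≤ α
  symm := by
    constructor
    intro i j h
    exact ⟨h.1.symm, by rw [max_comm]; exact h.2⟩
  loopless := ⟨fun i h => h.1 rfl⟩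

/-- Number of connected components of the Rips 1-skeleton at scale `α`. -/
def compCount (w : V → V → ℝ) (α : ℝ) : ℕ :=
  Nat.card (vrGraph w α).ConnectedComponent

/-- Left limit of the component counting function at `d`. -/
def compCountLeft (w : V → V → ℝ) (d : ℝ) : ℕ :=
  sInf (compCount w '' Set.Iio d)

/-- Multiplicity of `d` as a finite death time in the `H₀` persistence diagram. -/
def deathMult (w : V → V → ℝ) (d : ℝ) : ℕ :=
  compCountLeft w d - compCount w d

/-- The finitely many candidate filtration values (the edge weights). -/
def weightVals (w : V → V → ℝ) : Finset ℝ :=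
  Finset.image (fun p : V × V => max (w p.1 p.2) (w p.2 p.1)) Finset.univ

/-- The multiset of finite death times of the 0-dimensional persistence diagram
of the Vietoris–Rips filtration of the weighted complete graph `w`. -/
def finiteDeaths (w : V → V → ℝ) : Multiset ℝ :=
  (weightVals w).val.bind fun d => Multiset.replicate (deathMult w d) d

/-- The 0-dimensional persistence diagram (finite points; all births are `0`). -/
def D0 (w : V → V → ℝ) : Multiset (ℝ × ℝ) :=
  (finiteDeaths w).map fun d => (0, d)

/-- Threshold modification: weights above `ε` are raised to `1`. -/
def thresh (w : V → V → ℝ) (ε : ℝ) : V → V → ℝ :=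
  fun i j => if w i j ≤ ε then w i j else 1

/-- The number of finite 0-dimensional persistence points with death time `> ε`. -/
def mEps (w : V → V → ℝ) (ε : ℝ) : ℕ :=
  ((finiteDeaths w).filter (fun d => ε < d)).card

/-- A matching between two persistence diagrams: a multiset of pairs whose
projections recover each diagram augmented with some diagonal points. -/
def IsMatching (D1 D2 : Multiset (ℝ × ℝ)) (M : Multiset ((ℝ × ℝ) × (ℝ × ℝ))) : Prop :=
  ∃ S1 S2 : Multiset (ℝ × ℝ), (∀ u ∈ S1, u.1 = u.2) ∧ (∀ u ∈ S2, u.1 = u.2) ∧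
    M.map Prod.fst = D1 + S1 ∧ M.map Prod.snd = D2 + S2

/-- The `p`-th power cost of a matching, with the `ℓ_p` ground metric. -/
def matchCost (p : ℝ) (M : Multiset ((ℝ × ℝ) × (ℝ × ℝ))) : ℝ :=
  (M.map fun q => |q.1.1 - q.2.1| ^ p + |q.1.2 - q.2.2| ^ p).sum

/-- The `p`-Wasserstein distance between persistence diagrams. -/
def diagramDist (p : ℝ) (D1 D2 : Multiset (ℝ × ℝ)) : ℝ :=
  sInf {c | ∃ M, IsMatching D1 D2 M ∧ c = matchCost p M ^ (1 / p)}


namespace Finset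

theorem exists_le_lt_forall_notMem_Ioo (S : Finset ℝ) {a d : ℝ} (had : a < d) :
    ∃ β, a ≤ β ∧ β < d ∧ ∀ s ∈ S, s ∉ Set.Ioo β d := by
  set T := insert a (S.filter (· ∈ Set.Ioo a d))
  have hT : T.Nonempty := insert_nonempty _ _
  refine ⟨T.max' hT, T.le_max' a (mem_insert_self _ _), ?_, fun s hs ⟨hβs, hsd⟩ => ?_⟩
  · obtain h | h := mem_insert.mp (T.max'_mem hT)
    · exact h ▸ had
    · exact (mem_filter.mp h).2.2
  · have hsa : a < s := (T.le_max' a (mem_insert_self _ _)).trans_lt hβs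
    exact (T.le_max' s (mem_insert_of_mem (mem_filter.mpr ⟨hs, hsa, hsd⟩))).not_gt hβs

end Finset

section StepFunction

variable {g : ℝ → ℕ} {S : Finset ℝ}

theorem sInf_image_Iio_eq_of_forall_notMem_Ioo (hg : Antitone g)
    (hS : ∀ α β, α ≤ β → (∀ s ∈ S, s ∉ Set.Ioc α β) → g α = g β)
    {β d : ℝ} (hβd : β < d) (hgap : ∀ s ∈ S, s ∉ Set.Ioo β d) :
    sInf (g '' Set.Iio d) = g β := by
  refine le_antisymm (Nat.sInf_le ⟨β, hβd, rfl⟩) (le_csInf ⟨g β, β, hβd, rfl⟩ ?_)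
  rintro _ ⟨α, hαd, rfl⟩
  rcases le_total α β with hαβ | hβα
  · exact hg hαβ
  · exact (hS β α hβα fun s hs hsI => hgap s hs ⟨hsI.1, hsI.2.trans_lt hαd⟩).le

theorem sInf_image_Iio_sub_eq_zero_of_notMem (hg : Antitone g)
    (hS : ∀ α β, α ≤ β → (∀ s ∈ S, s ∉ Set.Ioc α β) → g α = g β)
    {d : ℝ} (hd : d ∉ S) : sInf (g '' Set.Iio d) - g d = 0 := by
  obtain ⟨β, -, hβd, hgap⟩ := S.exists_le_lt_forall_notMem_Ioo (sub_one_lt d)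
  rw [sInf_image_Iio_eq_of_forall_notMem_Ioo hg hS hβd hgap,
    hS β d hβd.le fun s hs hsI => hgap s hs ⟨hsI.1, hsI.2.lt_of_ne (ne_of_mem_of_not_mem hs hd)⟩,
    Nat.sub_self]

theorem sum_filter_Ioc_jump (hg : Antitone g)
    (hS : ∀ α β, α ≤ β → (∀ s ∈ S, s ∉ Set.Ioc α β) → g α = g β) {a b : ℝ} (hab : a ≤ b) :
    ∑ d ∈ S.filter (· ∈ Set.Ioc a b), (sInf (g '' Set.Iio d) - g d) = g a - g b := by
  induction hn : (S.filter (· ∈ Set.Ioc a b)).card generalizing b with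
  | zero =>
    have hT := Finset.card_eq_zero.mp hn
    rw [hT, Finset.sum_empty, hS a b hab fun s hs hsI => ?_, Nat.sub_self]
    exact Finset.notMem_empty s (hT ▸ Finset.mem_filter.mpr ⟨hs, hsI⟩)
  | succ n ih =>
    set T := S.filter (· ∈ Set.Ioc a b)
    have hT : T.Nonempty := Finset.card_pos.mp (by omega)
    set m := T.max' hT
    obtain ⟨hmS, ham, hmb⟩ := Finset.mem_filter.mp (T.max'_mem hT)
    obtain ⟨β, haβ, hβm, hgap⟩ := S.exists_le_lt_forall_notMem_Ioo ham
    have hgmb : g m = g b := hS m b hmb fun s hs hsI =>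
      (T.le_max' s (Finset.mem_filter.mpr ⟨hs, ham.trans hsI.1, hsI.2⟩)).not_gt hsI.1
    have herase : T.erase m = S.filter (· ∈ Set.Ioc a β) := by
      ext s
      simp only [Finset.mem_erase, Finset.mem_filter, Set.mem_Ioc, T]
      constructor
      · rintro ⟨hsm, hs, has, hsb⟩
        have hsm' : s < m :=
          (T.le_max' s (Finset.mem_filter.mpr ⟨hs, has, hsb⟩)).lt_of_ne hsm
        exact ⟨hs, has, not_lt.mp fun hβs => hgap s hs ⟨hβs, hsm'⟩⟩
      · rintro ⟨hs, has, hsβ⟩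
        exact ⟨(hsβ.trans_lt hβm).ne, hs, has, hsβ.trans (hβm.le.trans hmb)⟩
    have hcard : (S.filter (· ∈ Set.Ioc a β)).card = n := by
      rw [← herase, Finset.card_erase_of_mem (T.max'_mem hT)]
      omega
    rw [← Finset.add_sum_erase T _ (T.max'_mem hT), herase, ih haβ hcard,
      sInf_image_Iio_eq_of_forall_notMem_Ioo hg hS hβm hgap, ← hgmb, add_comm,
      tsub_add_tsub_cancel (hg haβ) (hg hβm.le)]

end StepFunction

section VietorisRips

variable {w : V → V → ℝ}

omit [Fintype V] in
theorem vrGraph_mono {α β : ℝ} (h : α ≤ β) : vrGraph w α ≤ vrGraph w β :=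
  fun _ _ hij => ⟨hij.1, hij.2.trans h⟩

omit [Fintype V] in
theorem vrGraph_eq_top {α : ℝ} (h : ∀ i j, w i j ≤ α) : vrGraph w α = ⊤ := by
  ext i j
  exact and_iff_left (max_le (h i j) (h j i))

theorem vrGraph_eq_of_forall_notMem_Ioc {α β : ℝ} (hαβ : α ≤ β)
    (h : ∀ s ∈ weightVals w, s ∉ Set.Ioc α β) : vrGraph w α = vrGraph w β := by
  refine le_antisymm (vrGraph_mono hαβ) fun i j hij => ⟨hij.1, not_lt.mp fun hα => ?_⟩
  exact h _ (Finset.mem_image_of_mem _ (Finset.mem_univ (i, j))) ⟨hα, hij.2⟩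

theorem compCount_antitone (w : V → V → ℝ) : Antitone (compCount w) :=
  fun _ _ h => SimpleGraph.ConnectedComponent.card_le_card_of_le (vrGraph_mono h)

theorem compCount_eq_of_forall_notMem_Ioc {α β : ℝ} (hαβ : α ≤ β)
    (h : ∀ s ∈ weightVals w, s ∉ Set.Ioc α β) : compCount w α = compCount w β := by
  rw [compCount, vrGraph_eq_of_forall_notMem_Ioc hαβ h, compCount]

theorem deathMult_eq_zero_of_notMem {d : ℝ} (hd : d ∉ weightVals w) : deathMult w d = 0 :=
  sInf_image_Iio_sub_eq_zero_of_notMem (compCount_antitone w)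
    (fun _ _ => compCount_eq_of_forall_notMem_Ioc) hd

theorem count_finiteDeaths (d : ℝ) : (finiteDeaths w).count d = deathMult w d := by
  rw [finiteDeaths, Multiset.count_bind]
  simp_rw [Multiset.count_replicate]
  change ∑ a ∈ weightVals w, _ = _
  rw [Finset.sum_ite_eq']
  split_ifs with hd
  · rfl
  · exact (deathMult_eq_zero_of_notMem hd).symm

theorem mem_weightVals_of_mem_finiteDeaths {d : ℝ} (hd : d ∈ finiteDeaths w) :
    d ∈ weightVals w := by
  obtain ⟨a, ha, hda⟩ := Multiset.mem_bind.mp hd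
  exact Multiset.eq_of_mem_replicate hda ▸ ha

theorem le_of_mem_weightVals {c d : ℝ} (h : ∀ i j, w i j ≤ c) (hd : d ∈ weightVals w) : d ≤ c := by
  obtain ⟨⟨i, j⟩, -, rfl⟩ := Finset.mem_image.mp hd
  exact max_le (h i j) (h j i)

theorem card_filter_finiteDeaths_Ioc {a b : ℝ} (hab : a ≤ b) :
    ((finiteDeaths w).filter (· ∈ Set.Ioc a b)).card = compCount w a - compCount w b := by
  rw [← Multiset.sum_count_eq_card (s := weightVals w)
    fun d hd => mem_weightVals_of_mem_finiteDeaths (Multiset.mem_of_mem_filter hd)]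
  simp_rw [Multiset.count_filter, count_finiteDeaths]
  rw [← Finset.sum_filter]
  exact sum_filter_Ioc_jump (compCount_antitone w) (fun _ _ => compCount_eq_of_forall_notMem_Ioc) hab

theorem card_filter_finiteDeaths_gt {a b : ℝ} (hw : ∀ i j, w i j ≤ b) (hab : a ≤ b) :
    ((finiteDeaths w).filter (a < ·)).card = compCount w a - compCount w b := by
  rw [← card_filter_finiteDeaths_Ioc hab]
  congr 1
  exact Multiset.filter_congr fun d hd =>
    (and_iff_left (le_of_mem_weightVals hw (mem_weightVals_of_mem_finiteDeaths hd))).symm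

end VietorisRips

section Threshold

variable {w : V → V → ℝ} {ε : ℝ}

omit [Fintype V] in
theorem thresh_le_iff_of_le {i j : V} {α : ℝ} (hw : w i j ≤ 1) (hα : α ≤ ε) :
    thresh w ε i j ≤ α ↔ w i j ≤ α := by
  unfold thresh
  split_ifs with h
  · rfl
  · exact iff_of_false (fun h1 => h (hw.trans (h1.trans hα))) fun h' => h (h'.trans hα)

omit [Fintype V] in
theorem thresh_le_one (hw1 : ∀ i j, w i j ≤ 1) (i j : V) : thresh w ε i j ≤ 1 := by
  unfold thresh
  split_ifs
  exacts [hw1 i j, le_rfl]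

omit [Fintype V] in
theorem compCount_thresh_of_le (hw1 : ∀ i j, w i j ≤ 1) {α : ℝ} (hα : α ≤ ε) :
    compCount (thresh w ε) α = compCount w α := by
  have : vrGraph (thresh w ε) α = vrGraph w α := by
    ext i j
    simp only [vrGraph, max_le_iff, thresh_le_iff_of_le (hw1 _ _) hα]
  rw [compCount, this, compCount]

omit [Fintype V] in
theorem deathMult_thresh_of_le (hw1 : ∀ i j, w i j ≤ 1) {d : ℝ} (hd : d ≤ ε) :
    deathMult (thresh w ε) d = deathMult w d := by
  have : compCount (thresh w ε) '' Set.Iio d = compCount w '' Set.Iio d :=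
    Set.image_congr fun α hα => compCount_thresh_of_le hw1 (hα.trans_le hd).le
  rw [deathMult, deathMult, compCountLeft, compCountLeft, this, compCount_thresh_of_le hw1 hd]

omit [Fintype V] in
theorem compCount_thresh_one (hw1 : ∀ i j, w i j ≤ 1) :
    compCount (thresh w ε) 1 = compCount w 1 := by
  rw [compCount, compCount, vrGraph_eq_top (thresh_le_one hw1), vrGraph_eq_top hw1]

theorem eq_one_of_mem_finiteDeaths_thresh (hε1 : ε ≤ 1) {d : ℝ}
    (hd : d ∈ finiteDeaths (thresh w ε)) (hεd : ε < d) : d = 1 := by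
  obtain ⟨⟨i, j⟩, -, rfl⟩ := Finset.mem_image.mp (mem_weightVals_of_mem_finiteDeaths hd)
  revert hεd
  dsimp only [thresh]
  split_ifs with hij hji hji
  · exact fun h => absurd (max_le hij hji) h.not_ge
  · exact fun _ => max_eq_right (hij.trans hε1)
  · exact fun _ => max_eq_left (hji.trans hε1)
  · exact fun _ => max_self 1

theorem finiteDeaths_thresh (hw1 : ∀ i j, w i j ≤ 1) (hε1 : ε ≤ 1) :
    finiteDeaths (thresh w ε) = (finiteDeaths w).map fun d => if d ≤ ε then d else 1 := by
  have hhigh : (finiteDeaths (thresh w ε)).filter (ε < ·) =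
      Multiset.replicate ((finiteDeaths w).filter (ε < ·)).card 1 := by
    refine Multiset.eq_replicate.mpr ⟨?_, fun d hd => ?_⟩
    · rw [card_filter_finiteDeaths_gt (thresh_le_one hw1) hε1, card_filter_finiteDeaths_gt hw1 hε1,
        compCount_thresh_of_le hw1 le_rfl, compCount_thresh_one hw1]
    · obtain ⟨hd, hεd⟩ := Multiset.mem_filter.mp hd
      exact eq_one_of_mem_finiteDeaths_thresh hε1 hd hεd
  have hlow : (finiteDeaths (thresh w ε)).filter (¬ ε < ·) =
      (finiteDeaths w).filter (¬ ε < ·) := by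
    ext d
    simp only [Multiset.count_filter, count_finiteDeaths]
    split_ifs with hd
    exacts [rfl, deathMult_thresh_of_le hw1 (not_lt.mp hd)]
  rw [← Multiset.filter_add_not (ε < ·) (finiteDeaths w), Multiset.map_add,
    ← Multiset.filter_add_not (ε < ·) (finiteDeaths (thresh w ε)), hhigh, hlow]
  congr 1
  · rw [Multiset.map_congr rfl fun d hd => if_neg (not_le.mpr (Multiset.mem_filter.mp hd).2),
      Multiset.map_const']
  · rw [Multiset.map_congr rfl fun d hd => if_pos (not_lt.mp (Multiset.mem_filter.mp hd).2),
      Multiset.map_id']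

end Threshold

section Matching

theorem matchCost_nonneg (p : ℝ) (M : Multiset ((ℝ × ℝ) × (ℝ × ℝ))) : 0 ≤ matchCost p M :=
  Multiset.sum_nonneg fun _ hx => by
    obtain ⟨q, -, rfl⟩ := Multiset.mem_map.mp hx
    positivity

theorem diagramDist_le_of_isMatching {p : ℝ} {D₁ D₂ : Multiset (ℝ × ℝ)}
    {M : Multiset ((ℝ × ℝ) × (ℝ × ℝ))} (hM : IsMatching D₁ D₂ M) :
    diagramDist p D₁ D₂ ≤ matchCost p M ^ (1 / p) :=
  csInf_le ⟨0, by rintro _ ⟨M', -, rfl⟩; exact Real.rpow_nonneg (matchCost_nonneg p M') _⟩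
    ⟨M, hM, rfl⟩

theorem isMatching_map (D : Multiset ℝ) (f : ℝ → ℝ) :
    IsMatching (D.map fun d => (0, d)) ((D.map f).map fun d => (0, d))
      (D.map fun d => ((0, d), (0, f d))) :=
  ⟨0, 0, by simp, by simp, by simp [Multiset.map_map], by simp [Multiset.map_map]⟩

theorem matchCost_map_thresh_le {p ε : ℝ} (hp : 0 < p) {D : Multiset ℝ} (hD : ∀ d ∈ D, d ≤ 1) :
    matchCost p (D.map fun d => ((0, d), (0, if d ≤ ε then d else 1))) ≤
      (D.filter (ε < ·)).card * (1 - ε) ^ p := by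
  set c : ℝ → ℝ := fun d => |d - if d ≤ ε then d else 1| ^ p
  have hcost : matchCost p (D.map fun d => ((0, d), (0, if d ≤ ε then d else 1))) =
      (D.map c).sum := by
    simp [matchCost, c, Multiset.map_map, Real.zero_rpow hp.ne']
  have hlow : ((D.filter (¬ ε < ·)).map c).sum = 0 := Multiset.sum_eq_zero fun x hx => by
    obtain ⟨d, hd, rfl⟩ := Multiset.mem_map.mp hx
    simp [c, if_pos (not_lt.mp (Multiset.mem_filter.mp hd).2), Real.zero_rpow hp.ne']
  have hhigh : ∀ x ∈ (D.filter (ε < ·)).map c, x ≤ (1 - ε) ^ p := by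
    intro x hx
    obtain ⟨d, hd, rfl⟩ := Multiset.mem_map.mp hx
    obtain ⟨hdD, hεd⟩ := Multiset.mem_filter.mp hd
    have hd1 := hD d hdD
    simp only [c, if_neg (not_le.mpr hεd), abs_sub_comm d, abs_of_nonneg (sub_nonneg.mpr hd1)]
    exact Real.rpow_le_rpow (by linarith) (by linarith) hp.le
  calc _ = ((D.filter (ε < ·)).map c).sum + ((D.filter (¬ ε < ·)).map c).sum := by
        rw [hcost, ← Multiset.sum_add, ← Multiset.map_add, Multiset.filter_add_not]
    _ ≤ ((D.filter (ε < ·)).map c).card • (1 - ε) ^ p := by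
        rw [hlow, add_zero]
        exact Multiset.sum_le_card_nsmul _ _ hhigh
    _ = _ := by rw [Multiset.card_map, nsmul_eq_mul]

end Matching

theorem wasserstein_bound_thresholded_general
    {N : ℕ} (w : Fin N → Fin N → ℝ)
    (hw1 : ∀ i j, w i j ≤ 1)
    (ε : ℝ) (hε1 : ε ≤ 1) (p : ℝ) (hp : 1 ≤ p) :
    diagramDist p (D0 w) (D0 (thresh w ε)) ≤ (mEps w ε : ℝ) ^ (1 / p) * (1 - ε) := by
  have hp0 : 0 < p := by linarith
  have hM := isMatching_map (finiteDeaths w) fun d => if d ≤ ε then d else 1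
  rw [← finiteDeaths_thresh hw1 hε1] at hM
  have hcost := matchCost_map_thresh_le (ε := ε) hp0 fun d hd =>
    le_of_mem_weightVals hw1 (mem_weightVals_of_mem_finiteDeaths hd)
  calc diagramDist p (D0 w) (D0 (thresh w ε))
      ≤ _ := diagramDist_le_of_isMatching hM
    _ ≤ ((mEps w ε : ℝ) * (1 - ε) ^ p) ^ (1 / p) :=
      Real.rpow_le_rpow (matchCost_nonneg _ _) hcost (by positivity)
    _ = (mEps w ε : ℝ) ^ (1 / p) * (1 - ε) := by
      rw [Real.mul_rpow (by positivity) (by positivity), one_div,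
        Real.rpow_rpow_inv (by linarith) hp0.ne']

/-- For a finite weighted complete graph `w` on `N` vertices with
weights in `[0,1]` and `0 ≤ ε ≤ 1`, the `p`-Wasserstein distance between the
0-dimensional persistence diagrams of `G` and its `ε`-thresholded version is at
most `m(ε)^{1/p} (1 - ε)`. -/
theorem wasserstein_bound_thresholded
    {N : ℕ} (w : Fin N → Fin N → ℝ)
    (hw0 : ∀ i j, 0 ≤ w i j) (hw1 : ∀ i j, w i j ≤ 1)
    (hsymm : ∀ i j, w i j = w j i)
    (ε : ℝ) (hε0 : 0 ≤ ε) (hε1 : ε ≤ 1) (p : ℝ) (hp : 1 ≤ p) :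
    diagramDist p (D0 w) (D0 (thresh w ε)) ≤ (mEps w ε : ℝ) ^ (1 / p) * (1 - ε) :=
  wasserstein_bound_thresholded_general w hw1 ε hε1 p hp

end
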